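/- arXiv:2512.01347 — 4 statements merged into one kernel-verified Lean document; each statement's English description precedes it below -/
import Mathlib

section
/- Suppose T : I × J → SO(3) is a smooth mapping satisfying T_{uv}(u,v) = T_v(u,v) · T(u,v)ᵀ · T_u(u,v) for all (u,v), and let α : I → ℝ and α̃ : J → ℝ be smooth functions. Then there exist framed curves (γ, ν₁, ν₂) : I → ℝ³ × ℝ³ × ℝ³ and (γ̃, ν̃₁, ν̃₂) : J → ℝ³ × ℝ³ × ℝ³ such that γ′(u) = α(u)μ(u) and γ̃′(v) = α̃(v)μ̃(v) for all u, v (where μ = ν₁ × ν₂ and μ̃ = ν̃₁ × ν̃₂), and the frame matrix of (γ, ν₁, ν₂) and (γ̃, ν̃₁, ν̃₂) is equal to T. -/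
open Matrix Real

noncomputable section

abbrev V3 : Type := Fin 3 → ℝ

def cross3 (a b : V3) : V3 := crossProduct a b

def mu3 (nu1 nu2 : ℝ → V3) (t : ℝ) : V3 := cross3 (nu1 t) (nu2 t)

/-- A framed curve on a set `I`. -/
def IsFramedCurve (I : Set ℝ) (g nu1 nu2 : ℝ → V3) : Prop :=
  ContDiffOn ℝ (⊤ : ℕ∞) g I ∧ ContDiffOn ℝ (⊤ : ℕ∞) nu1 I ∧ ContDiffOn ℝ (⊤ : ℕ∞) nu2 I ∧
  ∀ t ∈ I, nu1 t ⬝ᵥ nu1 t = 1 ∧ nu2 t ⬝ᵥ nu2 t = 1 ∧ nu1 t ⬝ᵥ nu2 t = 0 ∧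
    deriv g t ⬝ᵥ nu1 t = 0 ∧ deriv g t ⬝ᵥ nu2 t = 0

def curvL (nu1 nu2 : ℝ → V3) (t : ℝ) : ℝ := deriv nu1 t ⬝ᵥ nu2 t
def curvM (nu1 nu2 : ℝ → V3) (t : ℝ) : ℝ := deriv nu1 t ⬝ᵥ mu3 nu1 nu2 t
def curvN (nu1 nu2 : ℝ → V3) (t : ℝ) : ℝ := deriv nu2 t ⬝ᵥ mu3 nu1 nu2 t
def curvA (g nu1 nu2 : ℝ → V3) (t : ℝ) : ℝ := deriv g t ⬝ᵥ mu3 nu1 nu2 t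

/-- Frame matrix of two framed curves. -/
def frameMatrix (nu1 nu2 w1 w2 : ℝ → V3) (u v : ℝ) : Matrix (Fin 3) (Fin 3) ℝ :=
  Matrix.of fun i j => ![w1 v, w2 v, mu3 w1 w2 v] i ⬝ᵥ ![nu1 u, nu2 u, mu3 nu1 nu2 u] j

def det3 (a b c : V3) : ℝ := Matrix.det (Matrix.of ![a, b, c])

def pduV (f : ℝ → ℝ → V3) (u v : ℝ) : V3 := deriv (fun u' => f u' v) u
def pdvV (f : ℝ → ℝ → V3) (u v : ℝ) : V3 := deriv (fun v' => f u v') v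
def pduS (f : ℝ → ℝ → ℝ) (u v : ℝ) : ℝ := deriv (fun u' => f u' v) u
def pdvS (f : ℝ → ℝ → ℝ) (u v : ℝ) : ℝ := deriv (fun v' => f u v') v

/-- `A`-equivalence of the germ of `f` at `p` with the germ of `g` at `0`. -/
def AEquivAt (f : ℝ × ℝ → V3) (p : ℝ × ℝ) (g : ℝ × ℝ → V3) : Prop :=
  ∃ (U : Set (ℝ × ℝ)) (W : Set V3) (φ φi : ℝ × ℝ → ℝ × ℝ) (Ψ Ψi : V3 → V3),
    IsOpen U ∧ p ∈ U ∧ IsOpen W ∧ f p ∈ W ∧ (∀ q ∈ U, f q ∈ W) ∧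
    IsOpen (φ '' U) ∧ IsOpen (Ψ '' W) ∧
    ContDiffOn ℝ (⊤ : ℕ∞) φ U ∧ ContDiffOn ℝ (⊤ : ℕ∞) φi (φ '' U) ∧
    (∀ q ∈ U, φi (φ q) = q) ∧ (∀ q ∈ φ '' U, φ (φi q) = q) ∧
    ContDiffOn ℝ (⊤ : ℕ∞) Ψ W ∧ ContDiffOn ℝ (⊤ : ℕ∞) Ψi (Ψ '' W) ∧
    (∀ y ∈ W, Ψi (Ψ y) = y) ∧ (∀ y ∈ Ψ '' W, Ψ (Ψi y) = y) ∧
    φ p = 0 ∧ Ψ (f p) = g 0 ∧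
    ∀ q ∈ U, Ψ (f q) = g (φ q)

def crossCapModel : ℝ × ℝ → V3 := fun p => ![p.1, p.1 * p.2, p.2 ^ 2]
def S1PlusModel : ℝ × ℝ → V3 := fun p => ![p.1, p.2 ^ 2, p.2 * (p.1 ^ 2 + p.2 ^ 2)]
def S1MinusModel : ℝ × ℝ → V3 := fun p => ![p.1, p.2 ^ 2, p.2 * (p.1 ^ 2 - p.2 ^ 2)]
def cuspidalEdgeModel : ℝ × ℝ → V3 := fun p => ![p.1, p.2 ^ 2, p.2 ^ 3]
def swallowtailModel : ℝ × ℝ → V3 :=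
  fun p => ![p.1, 4 * p.2 ^ 3 + 2 * p.1 * p.2, 3 * p.2 ^ 4 + p.1 * p.2 ^ 2]
def cuspidalCrossCapModel : ℝ × ℝ → V3 := fun p => ![p.1, p.2 ^ 2, p.1 * p.2 ^ 3]
def D4PlusModel : ℝ × ℝ → V3 :=
  fun p => ![p.1 * p.2, p.1 ^ 2 + 3 * p.2 ^ 2, p.1 ^ 2 * p.2 + p.2 ^ 3]
def D4MinusModel : ℝ × ℝ → V3 :=
  fun p => ![p.1 * p.2, p.1 ^ 2 - 3 * p.2 ^ 2, p.1 ^ 2 * p.2 - p.2 ^ 3]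

def HasCrossCapAt (f : ℝ × ℝ → V3) (p : ℝ × ℝ) : Prop := AEquivAt f p crossCapModel
def HasS1PlusAt (f : ℝ × ℝ → V3) (p : ℝ × ℝ) : Prop := AEquivAt f p S1PlusModel
def HasS1MinusAt (f : ℝ × ℝ → V3) (p : ℝ × ℝ) : Prop := AEquivAt f p S1MinusModel
def HasCuspidalEdgeAt (f : ℝ × ℝ → V3) (p : ℝ × ℝ) : Prop := AEquivAt f p cuspidalEdgeModel
def HasSwallowtailAt (f : ℝ × ℝ → V3) (p : ℝ × ℝ) : Prop := AEquivAt f p swallowtailModel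
def HasCuspidalCrossCapAt (f : ℝ × ℝ → V3) (p : ℝ × ℝ) : Prop := AEquivAt f p cuspidalCrossCapModel
def HasD4PlusAt (f : ℝ × ℝ → V3) (p : ℝ × ℝ) : Prop := AEquivAt f p D4PlusModel
def HasD4MinusAt (f : ℝ × ℝ → V3) (p : ℝ × ℝ) : Prop := AEquivAt f p D4MinusModel

/-- A non-degenerate space curve parametrized by arc length on `I`. -/
def IsUnitSpeedNondeg (I : Set ℝ) (g : ℝ → V3) : Prop :=
  ContDiffOn ℝ (⊤ : ℕ∞) g I ∧ (∀ s ∈ I, deriv g s ⬝ᵥ deriv g s = 1) ∧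
  ∀ s ∈ I, deriv (deriv g) s ≠ 0

def fcurv (g : ℝ → V3) (s : ℝ) : ℝ := Real.sqrt (deriv (deriv g) s ⬝ᵥ deriv (deriv g) s)
def fnor (g : ℝ → V3) (s : ℝ) : V3 := (fcurv g s)⁻¹ • deriv (deriv g) s
def fbin (g : ℝ → V3) (s : ℝ) : V3 := cross3 (deriv g s) (fnor g s)
def ftor (g : ℝ → V3) (s : ℝ) : ℝ :=
  det3 (deriv g s) (deriv (deriv g) s) (deriv (deriv (deriv g)) s) / (fcurv g s) ^ 2

/-- Generalised framed surface on `U ⊆ ℝ²`. -/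
def IsGeneralisedFramedSurface (U : Set (ℝ × ℝ)) (x N1 N2 : ℝ × ℝ → V3) : Prop :=
  ContDiffOn ℝ (⊤ : ℕ∞) x U ∧ ContDiffOn ℝ (⊤ : ℕ∞) N1 U ∧ ContDiffOn ℝ (⊤ : ℕ∞) N2 U ∧
  (∀ p ∈ U, N1 p ⬝ᵥ N1 p = 1 ∧ N2 p ⬝ᵥ N2 p = 1 ∧ N1 p ⬝ᵥ N2 p = 0) ∧
  ∃ A B : ℝ × ℝ → ℝ, ContDiffOn ℝ (⊤ : ℕ∞) A U ∧ ContDiffOn ℝ (⊤ : ℕ∞) B U ∧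
    ∀ p ∈ U, cross3 (deriv (fun u => x (u, p.2)) p.1) (deriv (fun v => x (p.1, v)) p.2)
      = A p • N1 p + B p • N2 p

/-- Framed surface on `U ⊆ ℝ²`. -/
def IsFramedSurface (U : Set (ℝ × ℝ)) (x nn ss : ℝ × ℝ → V3) : Prop :=
  ContDiffOn ℝ (⊤ : ℕ∞) x U ∧ ContDiffOn ℝ (⊤ : ℕ∞) nn U ∧ ContDiffOn ℝ (⊤ : ℕ∞) ss U ∧
  ∀ p ∈ U, nn p ⬝ᵥ nn p = 1 ∧ ss p ⬝ᵥ ss p = 1 ∧ nn p ⬝ᵥ ss p = 0 ∧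
    deriv (fun u => x (u, p.2)) p.1 ⬝ᵥ nn p = 0 ∧ deriv (fun v => x (p.1, v)) p.2 ⬝ᵥ nn p = 0

/-- The vector field `η = -α̃(v) ∂/∂u + α(u) t₃₃(u,v) ∂/∂v` applied to a map `f`. -/
def etaD (g nu1 nu2 gt w1 w2 : ℝ → V3) (f : ℝ → ℝ → V3) (u v : ℝ) : V3 :=
  (-(curvA gt w1 w2 v)) • pduV f u v
    + (curvA g nu1 nu2 u * frameMatrix nu1 nu2 w1 w2 u v 2 2) • pdvV f u v

/-- `φ = det(ξx, ηx, ηηx)` for the translation surface `x(u,v) = γ(u) + γ̃(v)`. -/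
def phiD (g nu1 nu2 gt w1 w2 : ℝ → V3) (u v : ℝ) : ℝ :=
  det3 (pduV (fun a b => g a + gt b) u v)
    (etaD g nu1 nu2 gt w1 w2 (fun a b => g a + gt b) u v)
    (etaD g nu1 nu2 gt w1 w2 (etaD g nu1 nu2 gt w1 w2 (fun a b => g a + gt b)) u v)

/-- `n(u,v) = sin θ(u,v) ν₁(u) + cos θ(u,v) ν₂(u)`. -/
def nvecD (nu1 nu2 : ℝ → V3) (θ : ℝ → ℝ → ℝ) (u v : ℝ) : V3 :=
  Real.sin (θ u v) • nu1 u + Real.cos (θ u v) • nu2 u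

/-- `t = n × μ`. -/
def tvecD (nu1 nu2 : ℝ → V3) (θ : ℝ → ℝ → ℝ) (u v : ℝ) : V3 :=
  cross3 (nvecD nu1 nu2 θ u v) (mu3 nu1 nu2 u)

section Aux

open MeasureTheory

lemma aux_row_dot (A B : Matrix (Fin 3) (Fin 3) ℝ) (i j : Fin 3) :
    A i ⬝ᵥ B j = (A * Bᵀ) i j := by
  simp [Matrix.mul_apply, dotProduct]

lemma aux_col_dot (A B : Matrix (Fin 3) (Fin 3) ℝ) (i j : Fin 3) :
    (Aᵀ * B) i j = ∑ k, A k i * B k j := by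
  simp [Matrix.mul_apply]

lemma aux_so3_third_row {A : Matrix (Fin 3) (Fin 3) ℝ} (h1 : A * Aᵀ = 1) (h2 : A.det = 1) :
    cross3 (A 0) (A 1) = A 2 := by
  have h1' : Aᵀ * A = 1 := mul_eq_one_comm.mp h1
  have hdot : ∀ i j : Fin 3, A i ⬝ᵥ A j = (1 : Matrix (Fin 3) (Fin 3) ℝ) i j := by
    intro i j; rw [aux_row_dot, h1]
  have key : A *ᵥ (cross3 (A 0) (A 1) - A 2) = 0 := by
    funext i
    have hmv : (A *ᵥ (cross3 (A 0) (A 1) - A 2)) i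
        = A i ⬝ᵥ cross3 (A 0) (A 1) - A i ⬝ᵥ A 2 := by
      simp [Matrix.mulVec, dotProduct_sub]
    have hz : (0 : V3) i = 0 := rfl
    rw [hz, hmv]
    fin_cases i
    · show A 0 ⬝ᵥ cross3 (A 0) (A 1) - A 0 ⬝ᵥ A 2 = 0
      rw [show A 0 ⬝ᵥ cross3 (A 0) (A 1) = 0 from dot_self_cross _ _, hdot 0 2]
      simp [Matrix.one_apply]
    · show A 1 ⬝ᵥ cross3 (A 0) (A 1) - A 1 ⬝ᵥ A 2 = 0
      rw [show A 1 ⬝ᵥ cross3 (A 0) (A 1) = 0 from dot_cross_self _ _, hdot 1 2]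
      simp [Matrix.one_apply]
    · show A 2 ⬝ᵥ cross3 (A 0) (A 1) - A 2 ⬝ᵥ A 2 = 0
      have htriple : A 2 ⬝ᵥ cross3 (A 0) (A 1) = Matrix.det ![A 2, A 0, A 1] :=
        triple_product_eq_det _ _ _
      have hdet2 : Matrix.det ![A 2, A 0, A 1] = Matrix.det A := by
        rw [Matrix.det_fin_three A]
        erw [Matrix.det_fin_three]
        simp only [Matrix.cons_val_zero, Matrix.cons_val_one, Matrix.head_cons,
          Matrix.cons_val_two, Matrix.tail_cons, Matrix.head_fin_const]
        ring
      rw [htriple, hdet2, h2, hdot 2 2]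
      simp [Matrix.one_apply]
  have hAx : cross3 (A 0) (A 1) - A 2 = 0 := by
    have := congrArg (fun y => Aᵀ *ᵥ y) key
    simpa [Matrix.mulVec_mulVec, h1'] using this
  exact sub_eq_zero.mp hAx

lemma aux_const_of_hasDerivAt_zero {s : Set ℝ} (hs : IsOpen s) (hc : s.OrdConnected)
    {f : ℝ → ℝ} (hf : ∀ x ∈ s, HasDerivAt f 0 x) {a b : ℝ} (ha : a ∈ s) (hb : b ∈ s) :
    f a = f b := by
  refine Convex.is_const_of_fderivWithin_eq_zero (convex_iff_ordConnected.mpr hc)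
    (fun x hx => (hf x hx).differentiableAt.differentiableWithinAt) ?_ ha hb
  intro x hx
  rw [fderivWithin_of_isOpen hs hx, (hf x hx).hasFDerivAt.fderiv]
  ext
  simp

lemma aux_exists_antideriv {I : Set ℝ} (hI : IsOpen I) (hIc : I.OrdConnected)
    {t₀ : ℝ} (ht₀ : t₀ ∈ I) {h : ℝ → V3} (hh : ContDiffOn ℝ (⊤ : ℕ∞) h I) :
    ∃ g : ℝ → V3, ContDiffOn ℝ (⊤ : ℕ∞) g I ∧ ∀ t ∈ I, HasDerivAt g (h t) t := by
  have hd : ∀ t ∈ I, HasDerivAt (fun t => ∫ s in t₀..t, h s) (h t) t := by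
    intro t ht
    exact intervalIntegral.integral_hasDerivAt_right
      ((hh.continuousOn.mono (hIc.uIcc_subset ht₀ ht)).intervalIntegrable)
      (hh.continuousOn.stronglyMeasurableAtFilter hI t ht)
      (hh.continuousOn.continuousAt (hI.mem_nhds ht))
  refine ⟨fun t => ∫ s in t₀..t, h s, ?_, hd⟩
  refine (contDiffOn_infty_iff_deriv_of_isOpen hI).2
    ⟨fun t ht => (hd t ht).differentiableAt.differentiableWithinAt,
     hh.congr fun t ht => (hd t ht).deriv⟩

lemma aux_cross_e : cross3 ![(1:ℝ),0,0] ![0,1,0] = ![0,0,1] := by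
  funext i
  fin_cases i <;> simp [cross3, cross_apply]

lemma aux_trivial_framed (J : Set ℝ) (hJ : IsOpen J) (hJc : J.OrdConnected)
    (alt : ℝ → ℝ) (halt : ContDiffOn ℝ (⊤ : ℕ∞) alt J) :
    ∃ gt w1 w2 : ℝ → V3, IsFramedCurve J gt w1 w2 ∧
      ∀ v ∈ J, deriv gt v = alt v • mu3 w1 w2 v := by
  have hmu : ∀ v : ℝ, mu3 (fun _ => ![(1:ℝ),0,0]) (fun _ => ![0,1,0]) v = ![0,0,1] :=
    fun v => aux_cross_e
  rcases J.eq_empty_or_nonempty with rfl | ⟨v₀, hv₀⟩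
  · exact ⟨0, fun _ => ![1,0,0], fun _ => ![0,1,0],
      ⟨fun x hx => hx.elim, fun x hx => hx.elim, fun x hx => hx.elim, fun x hx => hx.elim⟩,
      fun x hx => hx.elim⟩
  obtain ⟨gt, hgt, hgd⟩ := aux_exists_antideriv hJ hJc hv₀
    (h := fun v => alt v • (![0,0,1] : V3)) (halt.smul contDiffOn_const)
  refine ⟨gt, fun _ => ![1,0,0], fun _ => ![0,1,0], ⟨hgt, contDiffOn_const, contDiffOn_const,
    ?_⟩, ?_⟩
  · intro t ht
    have hdg : deriv gt t = alt t • (![0,0,1] : V3) := (hgd t ht).deriv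
    refine ⟨by simp [dotProduct, Fin.sum_univ_three], by simp [dotProduct, Fin.sum_univ_three],
      by simp [dotProduct, Fin.sum_univ_three], ?_, ?_⟩ <;>
    · rw [hdg]
      simp [dotProduct, Fin.sum_univ_three, Pi.smul_apply]
  · intro v hv
    rw [hmu v, (hgd v hv).deriv]

lemma aux_sliceU_hasDerivAt {f : ℝ × ℝ → ℝ} {Ω : Set (ℝ × ℝ)} (hΩ : IsOpen Ω)
    (hf : ContDiffOn ℝ (⊤ : ℕ∞) f Ω) {u v : ℝ} (h : (u, v) ∈ Ω) :
    HasDerivAt (fun a => f (a, v)) (pduS (fun a b => f (a, b)) u v) u := by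
  have hdf : DifferentiableAt ℝ f (u, v) :=
    (hf.contDiffAt (hΩ.mem_nhds h)).differentiableAt (by norm_num)
  have h1 : HasDerivAt (fun a : ℝ => ((a : ℝ), v)) ((1 : ℝ), (0 : ℝ)) u :=
    HasDerivAt.prodMk (hasDerivAt_id u) (hasDerivAt_const u v)
  have h2 : HasDerivAt (fun a => f (a, v)) (fderiv ℝ f (u, v) (1, 0)) u :=
    hdf.hasFDerivAt.comp_hasDerivAt u h1
  have hval : pduS (fun a b => f (a, b)) u v = fderiv ℝ f (u, v) (1, 0) := h2.deriv
  rw [hval]; exact h2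

lemma aux_sliceV_hasDerivAt {f : ℝ × ℝ → ℝ} {Ω : Set (ℝ × ℝ)} (hΩ : IsOpen Ω)
    (hf : ContDiffOn ℝ (⊤ : ℕ∞) f Ω) {u v : ℝ} (h : (u, v) ∈ Ω) :
    HasDerivAt (fun b => f (u, b)) (pdvS (fun a b => f (a, b)) u v) v := by
  have hdf : DifferentiableAt ℝ f (u, v) :=
    (hf.contDiffAt (hΩ.mem_nhds h)).differentiableAt (by norm_num)
  have h1 : HasDerivAt (fun b : ℝ => (u, (b : ℝ))) ((0 : ℝ), (1 : ℝ)) v :=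
    HasDerivAt.prodMk (hasDerivAt_const v u) (hasDerivAt_id v)
  have h2 : HasDerivAt (fun b => f (u, b)) (fderiv ℝ f (u, v) (0, 1)) v :=
    hdf.hasFDerivAt.comp_hasDerivAt v h1
  have hval : pdvS (fun a b => f (a, b)) u v = fderiv ℝ f (u, v) (0, 1) := h2.deriv
  rw [hval]; exact h2

lemma aux_pduS_eq_fderiv {f : ℝ × ℝ → ℝ} {Ω : Set (ℝ × ℝ)} (hΩ : IsOpen Ω)
    (hf : ContDiffOn ℝ (⊤ : ℕ∞) f Ω) {u v : ℝ} (h : (u, v) ∈ Ω) :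
    pduS (fun a b => f (a, b)) u v = fderiv ℝ f (u, v) (1, 0) := by
  have hdf : DifferentiableAt ℝ f (u, v) :=
    (hf.contDiffAt (hΩ.mem_nhds h)).differentiableAt (by norm_num)
  have h1 : HasDerivAt (fun a : ℝ => ((a : ℝ), v)) ((1 : ℝ), (0 : ℝ)) u :=
    HasDerivAt.prodMk (hasDerivAt_id u) (hasDerivAt_const u v)
  exact (hdf.hasFDerivAt.comp_hasDerivAt u h1).deriv

lemma aux_mixed_hasDerivAt {f : ℝ × ℝ → ℝ} {Ω : Set (ℝ × ℝ)} (hΩ : IsOpen Ω)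
    (hf : ContDiffOn ℝ (⊤ : ℕ∞) f Ω) {u v : ℝ} (h : (u, v) ∈ Ω) :
    HasDerivAt (fun b => pduS (fun a b' => f (a, b')) u b)
      (pdvS (pduS (fun a b' => f (a, b'))) u v) v := by
  have hg1smooth : ContDiffOn ℝ (⊤ : ℕ∞) (fun p => fderiv ℝ f p (1, 0)) Ω :=
    (hf.fderiv_of_isOpen hΩ (by simp)).clm_apply contDiffOn_const
  have hopen : IsOpen {b : ℝ | (u, b) ∈ Ω} := hΩ.preimage (Continuous.prodMk_right u)
  have heq : (fun b => pduS (fun a b' => f (a, b')) u b)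
      =ᶠ[nhds v] (fun b => fderiv ℝ f (u, b) (1, 0)) := by
    filter_upwards [hopen.mem_nhds h] with b hb
    exact aux_pduS_eq_fderiv hΩ hf hb
  have hdiff : DifferentiableAt ℝ (fun b => fderiv ℝ f (u, b) (1, 0)) v := by
    have hg : DifferentiableAt ℝ (fun p => fderiv ℝ f p (1, 0)) (u, v) :=
      ((hg1smooth.contDiffAt (hΩ.mem_nhds h)).differentiableAt (by norm_num))
    exact hg.comp v (DifferentiableAt.prodMk (differentiableAt_const u) differentiableAt_id)
  have hb : HasDerivAt (fun b => fderiv ℝ f (u, b) (1, 0))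
      (deriv (fun b => fderiv ℝ f (u, b) (1, 0)) v) v := hdiff.hasDerivAt
  have h2 : HasDerivAt (fun b => pduS (fun a b' => f (a, b')) u b)
      (deriv (fun b => fderiv ℝ f (u, b) (1, 0)) v) v := hb.congr_of_eventuallyEq heq
  have hval : pdvS (pduS (fun a b' => f (a, b'))) u v
      = deriv (fun b => fderiv ℝ f (u, b) (1, 0)) v := h2.deriv
  rw [hval]; exact h2

end Aux

/-- existence of framed curves realizing a given integrable `SO(3)`-valued matrix
as their frame matrix, with prescribed speed functions `α`, `α̃`. -/
theorem exists_framedCurves_of_frameMatrix_pde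
    (I J : Set ℝ) (hI : IsOpen I) (hIc : I.OrdConnected)
    (hJ : IsOpen J) (hJc : J.OrdConnected)
    (T : ℝ → ℝ → Matrix (Fin 3) (Fin 3) ℝ)
    (hTsmooth : ∀ i j, ContDiffOn ℝ (⊤ : ℕ∞) (fun p : ℝ × ℝ => T p.1 p.2 i j) (I ×ˢ J))
    (hTSO : ∀ u ∈ I, ∀ v ∈ J, T u v * (T u v)ᵀ = 1 ∧ (T u v).det = 1)
    (hPDE : ∀ u ∈ I, ∀ v ∈ J,
      (Matrix.of fun i j => pdvS (pduS (fun a b => T a b i j)) u v)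
        = (Matrix.of fun i j => pdvS (fun a b => T a b i j) u v) * (T u v)ᵀ
            * (Matrix.of fun i j => pduS (fun a b => T a b i j) u v))
    (al alt : ℝ → ℝ)
    (hal : ContDiffOn ℝ (⊤ : ℕ∞) al I) (halt : ContDiffOn ℝ (⊤ : ℕ∞) alt J) :
    ∃ g nu1 nu2 gt w1 w2 : ℝ → V3,
      IsFramedCurve I g nu1 nu2 ∧ IsFramedCurve J gt w1 w2 ∧
      (∀ u ∈ I, deriv g u = al u • mu3 nu1 nu2 u) ∧
      (∀ v ∈ J, deriv gt v = alt v • mu3 w1 w2 v) ∧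
      ∀ u ∈ I, ∀ v ∈ J, frameMatrix nu1 nu2 w1 w2 u v = T u v := by
  classical
  rcases I.eq_empty_or_nonempty with hIe | ⟨u₀, hu₀⟩
  · obtain ⟨g, nu1, nu2, hf1, hd1⟩ := aux_trivial_framed I hI hIc al hal
    obtain ⟨gt, w1, w2, hf2, hd2⟩ := aux_trivial_framed J hJ hJc alt halt
    exact ⟨g, nu1, nu2, gt, w1, w2, hf1, hf2, hd1, hd2,
      fun u hu => absurd (hIe ▸ hu) (Set.notMem_empty u)⟩
  rcases J.eq_empty_or_nonempty with hJe | ⟨v₀, hv₀⟩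
  · obtain ⟨g, nu1, nu2, hf1, hd1⟩ := aux_trivial_framed I hI hIc al hal
    obtain ⟨gt, w1, w2, hf2, hd2⟩ := aux_trivial_framed J hJ hJc alt halt
    exact ⟨g, nu1, nu2, gt, w1, w2, hf1, hf2, hd1, hd2,
      fun u hu v hv => absurd (hJe ▸ hv) (Set.notMem_empty v)⟩
  have hΩ : IsOpen (I ×ˢ J) := hI.prod hJ
  set Tu : ℝ → ℝ → Matrix (Fin 3) (Fin 3) ℝ :=
    fun u v => Matrix.of fun i j => pduS (fun a b => T a b i j) u v with hTu_def
  set Tv : ℝ → ℝ → Matrix (Fin 3) (Fin 3) ℝ :=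
    fun u v => Matrix.of fun i j => pdvS (fun a b => T a b i j) u v with hTv_def
  have hTT : ∀ u ∈ I, ∀ v ∈ J, T u v * (T u v)ᵀ = 1 := fun u hu v hv => (hTSO u hu v hv).1
  have hTT' : ∀ u ∈ I, ∀ v ∈ J, (T u v)ᵀ * T u v = 1 :=
    fun u hu v hv => mul_eq_one_comm.mp (hTT u hu v hv)
  have hU : ∀ (i j : Fin 3), ∀ u ∈ I, ∀ v ∈ J,
      HasDerivAt (fun a => T a v i j) (Tu u v i j) u :=
    fun i j u hu v hv => aux_sliceU_hasDerivAt hΩ (hTsmooth i j) ⟨hu, hv⟩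
  have hV : ∀ (i j : Fin 3), ∀ u ∈ I, ∀ v ∈ J,
      HasDerivAt (fun b => T u b i j) (Tv u v i j) v :=
    fun i j u hu v hv => aux_sliceV_hasDerivAt hΩ (hTsmooth i j) ⟨hu, hv⟩
  have hUV : ∀ (i j : Fin 3), ∀ u ∈ I, ∀ v ∈ J,
      HasDerivAt (fun b => Tu u b i j) ((Tv u v * (T u v)ᵀ * Tu u v) i j) v := by
    intro i j u hu v hv
    have h : HasDerivAt (fun b => Tu u b i j)
        (pdvS (pduS (fun a b => T a b i j)) u v) v :=
      aux_mixed_hasDerivAt hΩ (hTsmooth i j) ⟨hu, hv⟩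
    have e : pdvS (pduS (fun a b => T a b i j)) u v = (Tv u v * (T u v)ᵀ * Tu u v) i j :=
      congrFun (congrFun (hPDE u hu v hv) i) j
    rw [e] at h
    exact h
  have hSkewV : ∀ u ∈ I, ∀ v ∈ J, (Tv u v)ᵀ * T u v + (T u v)ᵀ * Tv u v = 0 := by
    intro u hu v hv
    ext i j
    have h1 : HasDerivAt (fun b => ∑ k, T u b k i * T u b k j)
        (∑ k, (Tv u v k i * T u v k j + T u v k i * Tv u v k j)) v :=
      HasDerivAt.fun_sum fun k _ => (hV k i u hu v hv).mul (hV k j u hu v hv)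
    have h0 : HasDerivAt (fun b => ∑ k, T u b k i * T u b k j) (0 : ℝ) v := by
      have heq : (fun b => ∑ k, T u b k i * T u b k j)
          =ᶠ[nhds v] (fun _ => ((1 : Matrix (Fin 3) (Fin 3) ℝ)) i j) := by
        filter_upwards [hJ.mem_nhds hv] with b hb
        calc ∑ k, T u b k i * T u b k j = ((T u b)ᵀ * T u b) i j :=
              (aux_col_dot _ _ i j).symm
          _ = (1 : Matrix (Fin 3) (Fin 3) ℝ) i j := by rw [hTT' u hu b hb]
      exact (hasDerivAt_const v _).congr_of_eventuallyEq heq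
    have hsum : (∑ k, (Tv u v k i * T u v k j + T u v k i * Tv u v k j)) = 0 := h1.unique h0
    have e3 : ((Tv u v)ᵀ * T u v + (T u v)ᵀ * Tv u v) i j
        = ∑ k, (Tv u v k i * T u v k j + T u v k i * Tv u v k j) := by
      rw [Matrix.add_apply, aux_col_dot, aux_col_dot, ← Finset.sum_add_distrib]
    rw [e3, hsum]
    simp
  have hSkewU : ∀ u ∈ I, ∀ v ∈ J, (Tu u v)ᵀ * T u v + (T u v)ᵀ * Tu u v = 0 := by
    intro u hu v hv
    ext i j
    have h1 : HasDerivAt (fun a => ∑ k, T a v k i * T a v k j)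
        (∑ k, (Tu u v k i * T u v k j + T u v k i * Tu u v k j)) u :=
      HasDerivAt.fun_sum fun k _ => (hU k i u hu v hv).mul (hU k j u hu v hv)
    have h0 : HasDerivAt (fun a => ∑ k, T a v k i * T a v k j) (0 : ℝ) u := by
      have heq : (fun a => ∑ k, T a v k i * T a v k j)
          =ᶠ[nhds u] (fun _ => ((1 : Matrix (Fin 3) (Fin 3) ℝ)) i j) := by
        filter_upwards [hI.mem_nhds hu] with a ha
        calc ∑ k, T a v k i * T a v k j = ((T a v)ᵀ * T a v) i j :=
              (aux_col_dot _ _ i j).symm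
          _ = (1 : Matrix (Fin 3) (Fin 3) ℝ) i j := by rw [hTT' a ha v hv]
      exact (hasDerivAt_const u _).congr_of_eventuallyEq heq
    have hsum : (∑ k, (Tu u v k i * T u v k j + T u v k i * Tu u v k j)) = 0 := h1.unique h0
    have e3 : ((Tu u v)ᵀ * T u v + (T u v)ᵀ * Tu u v) i j
        = ∑ k, (Tu u v k i * T u v k j + T u v k i * Tu u v k j) := by
      rw [Matrix.add_apply, aux_col_dot, aux_col_dot, ← Finset.sum_add_distrib]
    rw [e3, hsum]
    simp
  have hM : ∀ u ∈ I, ∀ v ∈ J, (T u v)ᵀ * Tu u v = (T u v₀)ᵀ * Tu u v₀ := by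
    intro u hu v hv
    ext i j
    have hder : ∀ b ∈ J, HasDerivAt (fun b' => ∑ k, T u b' k i * Tu u b' k j) 0 b := by
      intro b hb
      have h1 : HasDerivAt (fun b' => ∑ k, T u b' k i * Tu u b' k j)
          (∑ k, (Tv u b k i * Tu u b k j
            + T u b k i * (Tv u b * (T u b)ᵀ * Tu u b) k j)) b :=
        HasDerivAt.fun_sum fun k _ => (hV k i u hu b hb).mul (hUV k j u hu b hb)
      have hs : (T u b)ᵀ * Tv u b = -((Tv u b)ᵀ * T u b) :=
        eq_neg_of_add_eq_zero_right (hSkewV u hu b hb)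
      have hmat : (Tv u b)ᵀ * Tu u b + (T u b)ᵀ * (Tv u b * (T u b)ᵀ * Tu u b) = 0 := by
        have e1 : (T u b)ᵀ * (Tv u b * (T u b)ᵀ * Tu u b)
            = ((T u b)ᵀ * Tv u b) * ((T u b)ᵀ * Tu u b) := by
          simp only [Matrix.mul_assoc]
        rw [e1, hs, neg_mul]
        have e2 : ((Tv u b)ᵀ * T u b) * ((T u b)ᵀ * Tu u b) = (Tv u b)ᵀ * Tu u b := by
          calc ((Tv u b)ᵀ * T u b) * ((T u b)ᵀ * Tu u b)
              = (Tv u b)ᵀ * (T u b * ((T u b)ᵀ * Tu u b)) := by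
                simp only [Matrix.mul_assoc]
            _ = (Tv u b)ᵀ * ((T u b * (T u b)ᵀ) * Tu u b) := by
                simp only [Matrix.mul_assoc]
            _ = (Tv u b)ᵀ * Tu u b := by rw [hTT u hu b hb, Matrix.one_mul]
        rw [e2, add_neg_cancel]
      have e3 : ((Tv u b)ᵀ * Tu u b + (T u b)ᵀ * (Tv u b * (T u b)ᵀ * Tu u b)) i j
          = ∑ k, (Tv u b k i * Tu u b k j
            + T u b k i * (Tv u b * (T u b)ᵀ * Tu u b) k j) := by
        rw [Matrix.add_apply, aux_col_dot, aux_col_dot, ← Finset.sum_add_distrib]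
      have hval : (∑ k, (Tv u b k i * Tu u b k j
          + T u b k i * (Tv u b * (T u b)ᵀ * Tu u b) k j)) = 0 := by
        rw [← e3, hmat, Matrix.zero_apply]
      exact hval ▸ h1
    have hc := aux_const_of_hasDerivAt_zero hJ hJc hder hv hv₀
    rw [aux_col_dot, aux_col_dot]
    exact hc
  have hG : ∀ v ∈ J, ∀ u ∈ I, T u v * (T u v₀)ᵀ = T u₀ v * (T u₀ v₀)ᵀ := by
    intro v hv u hu
    ext i j
    have hder : ∀ a ∈ I, HasDerivAt (fun a' => ∑ k, T a' v i k * T a' v₀ j k) 0 a := by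
      intro a ha
      have h1 : HasDerivAt (fun a' => ∑ k, T a' v i k * T a' v₀ j k)
          (∑ k, (Tu a v i k * T a v₀ j k + T a v i k * Tu a v₀ j k)) a :=
        HasDerivAt.fun_sum fun k _ => (hU i k a ha v hv).mul (hU j k a ha v₀ hv₀)
      set M : Matrix (Fin 3) (Fin 3) ℝ := (T a v₀)ᵀ * Tu a v₀ with hMdef
      have hT1 : Tu a v = T a v * M := by
        rw [hMdef, ← hM a ha v hv, ← Matrix.mul_assoc, hTT a ha v hv, Matrix.one_mul]
      have hT2 : Tu a v₀ = T a v₀ * M := by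
        rw [hMdef, ← Matrix.mul_assoc, hTT a ha v₀ hv₀, Matrix.one_mul]
      have hsk : Mᵀ = -M := by
        have h' : Mᵀ = (Tu a v₀)ᵀ * T a v₀ := by
          rw [hMdef, Matrix.transpose_mul, Matrix.transpose_transpose]
        rw [h', hMdef]
        exact eq_neg_of_add_eq_zero_left (hSkewU a ha v₀ hv₀)
      have hmat : Tu a v * (T a v₀)ᵀ + T a v * (Tu a v₀)ᵀ = 0 := by
        calc Tu a v * (T a v₀)ᵀ + T a v * (Tu a v₀)ᵀ
            = T a v * (M * (T a v₀)ᵀ) + T a v * (Mᵀ * (T a v₀)ᵀ) := by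
              rw [hT1, hT2, Matrix.transpose_mul]
              simp only [Matrix.mul_assoc]
          _ = T a v * ((M + Mᵀ) * (T a v₀)ᵀ) := by
              rw [Matrix.add_mul, Matrix.mul_add]
          _ = 0 := by
              rw [hsk, add_neg_cancel, Matrix.zero_mul, Matrix.mul_zero]
      have e3 : (Tu a v * (T a v₀)ᵀ + T a v * (Tu a v₀)ᵀ) i j
          = ∑ k, (Tu a v i k * T a v₀ j k + T a v i k * Tu a v₀ j k) := by
        simp only [Matrix.add_apply, Matrix.mul_apply, Matrix.transpose_apply]
        rw [← Finset.sum_add_distrib]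
      have hval : (∑ k, (Tu a v i k * T a v₀ j k + T a v i k * Tu a v₀ j k)) = 0 := by
        rw [← e3, hmat, Matrix.zero_apply]
      exact hval ▸ h1
    have hc := aux_const_of_hasDerivAt_zero hI hIc hder hu hu₀
    have e4 : ∀ a : ℝ, (T a v * (T a v₀)ᵀ) i j = ∑ k, T a v i k * T a v₀ j k := by
      intro a
      simp [Matrix.mul_apply, Matrix.transpose_apply]
    rw [e4 u, e4 u₀]
    exact hc
  have hKey : ∀ u ∈ I, ∀ v ∈ J, T u₀ v * (T u₀ v₀)ᵀ * T u v₀ = T u v := by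
    intro u hu v hv
    calc T u₀ v * (T u₀ v₀)ᵀ * T u v₀
        = T u v * (T u v₀)ᵀ * T u v₀ := by rw [← hG v hv u hu]
      _ = T u v := by rw [Matrix.mul_assoc, hTT' u hu v₀ hv₀, Matrix.mul_one]
  -- Frames
  set nu1 : ℝ → V3 := fun u => (T u v₀)ᵀ 0 with hnu1_def
  set nu2 : ℝ → V3 := fun u => (T u v₀)ᵀ 1 with hnu2_def
  set w1 : ℝ → V3 := fun v => (T u₀ v * (T u₀ v₀)ᵀ) 0 with hw1_def
  set w2 : ℝ → V3 := fun v => (T u₀ v * (T u₀ v₀)ᵀ) 1 with hw2_def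
  have hFso : ∀ u ∈ I, (T u v₀)ᵀ * ((T u v₀)ᵀ)ᵀ = 1 ∧ ((T u v₀)ᵀ).det = 1 := by
    intro u hu
    constructor
    · rw [Matrix.transpose_transpose]
      exact hTT' u hu v₀ hv₀
    · rw [Matrix.det_transpose]
      exact (hTSO u hu v₀ hv₀).2
  have hWso : ∀ v ∈ J, (T u₀ v * (T u₀ v₀)ᵀ) * (T u₀ v * (T u₀ v₀)ᵀ)ᵀ = 1
      ∧ (T u₀ v * (T u₀ v₀)ᵀ).det = 1 := by
    intro v hv
    constructor
    · rw [Matrix.transpose_mul, Matrix.transpose_transpose]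
      have e : T u₀ v * (T u₀ v₀)ᵀ * (T u₀ v₀ * (T u₀ v)ᵀ)
          = T u₀ v * (((T u₀ v₀)ᵀ * T u₀ v₀) * (T u₀ v)ᵀ) := by
        simp only [Matrix.mul_assoc]
      rw [e, hTT' u₀ hu₀ v₀ hv₀, Matrix.one_mul, hTT u₀ hu₀ v hv]
    · rw [Matrix.det_mul, Matrix.det_transpose, (hTSO u₀ hu₀ v hv).2,
        (hTSO u₀ hu₀ v₀ hv₀).2, one_mul]
  have hmuN : ∀ u ∈ I, mu3 nu1 nu2 u = (T u v₀)ᵀ 2 := fun u hu =>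
    aux_so3_third_row (hFso u hu).1 (hFso u hu).2
  have hmuW : ∀ v ∈ J, mu3 w1 w2 v = (T u₀ v * (T u₀ v₀)ᵀ) 2 := fun v hv =>
    aux_so3_third_row (hWso v hv).1 (hWso v hv).2
  -- Smoothness
  have hslice : ∀ (i j : Fin 3), ContDiffOn ℝ (⊤ : ℕ∞) (fun u => T u v₀ i j) I := by
    intro i j
    exact (hTsmooth i j).comp ((contDiff_id.prodMk contDiff_const).contDiffOn)
      (fun u hu => ⟨hu, hv₀⟩)
  have hsliceJ : ∀ (i j : Fin 3), ContDiffOn ℝ (⊤ : ℕ∞) (fun v => T u₀ v i j) J := by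
    intro i j
    exact (hTsmooth i j).comp ((contDiff_const.prodMk contDiff_id).contDiffOn)
      (fun v hv => ⟨hu₀, hv⟩)
  have hnu1s : ContDiffOn ℝ (⊤ : ℕ∞) nu1 I := contDiffOn_pi.mpr fun k => hslice k 0
  have hnu2s : ContDiffOn ℝ (⊤ : ℕ∞) nu2 I := contDiffOn_pi.mpr fun k => hslice k 1
  have hws : ∀ (i k : Fin 3), ContDiffOn ℝ (⊤ : ℕ∞)
      (fun v => (T u₀ v * (T u₀ v₀)ᵀ) i k) J := by
    intro i k
    have e : ∀ v : ℝ, (T u₀ v * (T u₀ v₀)ᵀ) i k = ∑ m, T u₀ v i m * T u₀ v₀ k m := by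
      intro v
      simp [Matrix.mul_apply, Matrix.transpose_apply]
    exact (ContDiffOn.sum fun m _ => (hsliceJ i m).mul contDiffOn_const).congr
      fun v _ => e v
  have hw1s : ContDiffOn ℝ (⊤ : ℕ∞) w1 J := contDiffOn_pi.mpr fun k => hws 0 k
  have hw2s : ContDiffOn ℝ (⊤ : ℕ∞) w2 J := contDiffOn_pi.mpr fun k => hws 1 k
  -- Curves
  have hgsm : ContDiffOn ℝ (⊤ : ℕ∞) (fun u => al u • ((T u v₀)ᵀ 2 : V3)) I :=
    hal.smul (contDiffOn_pi.mpr fun k => hslice k 2)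
  obtain ⟨g, hgs, hgd⟩ := aux_exists_antideriv hI hIc hu₀ hgsm
  have hgtsm : ContDiffOn ℝ (⊤ : ℕ∞)
      (fun v => alt v • ((T u₀ v * (T u₀ v₀)ᵀ) 2 : V3)) J :=
    halt.smul (contDiffOn_pi.mpr fun k => hws 2 k)
  obtain ⟨gt, hgts, hgtd⟩ := aux_exists_antideriv hJ hJc hv₀ hgtsm
  have hgderiv : ∀ u ∈ I, deriv g u = al u • mu3 nu1 nu2 u := by
    intro u hu
    rw [hmuN u hu]
    exact (hgd u hu).deriv
  have hgtderiv : ∀ v ∈ J, deriv gt v = alt v • mu3 w1 w2 v := by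
    intro v hv
    rw [hmuW v hv]
    exact (hgtd v hv).deriv
  have hrowdot : ∀ u ∈ I, ∀ i j : Fin 3,
      (T u v₀)ᵀ i ⬝ᵥ (T u v₀)ᵀ j = (1 : Matrix (Fin 3) (Fin 3) ℝ) i j := by
    intro u hu i j
    rw [aux_row_dot, (hFso u hu).1]
  have hrowdotW : ∀ v ∈ J, ∀ i j : Fin 3,
      (T u₀ v * (T u₀ v₀)ᵀ) i ⬝ᵥ (T u₀ v * (T u₀ v₀)ᵀ) j
        = (1 : Matrix (Fin 3) (Fin 3) ℝ) i j := by
    intro v hv i j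
    rw [aux_row_dot, (hWso v hv).1]
  have hfc1 : IsFramedCurve I g nu1 nu2 := by
    refine ⟨hgs, hnu1s, hnu2s, ?_⟩
    intro t ht
    have hdg : deriv g t = al t • ((T t v₀)ᵀ 2 : V3) := (hgd t ht).deriv
    refine ⟨?_, ?_, ?_, ?_, ?_⟩
    · show (T t v₀)ᵀ 0 ⬝ᵥ (T t v₀)ᵀ 0 = 1
      rw [hrowdot t ht 0 0, Matrix.one_apply_eq]
    · show (T t v₀)ᵀ 1 ⬝ᵥ (T t v₀)ᵀ 1 = 1
      rw [hrowdot t ht 1 1, Matrix.one_apply_eq]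
    · show (T t v₀)ᵀ 0 ⬝ᵥ (T t v₀)ᵀ 1 = 0
      rw [hrowdot t ht 0 1]
      simp [Matrix.one_apply]
    · show deriv g t ⬝ᵥ (T t v₀)ᵀ 0 = 0
      rw [hdg, smul_dotProduct, hrowdot t ht 2 0]
      simp [Matrix.one_apply]
    · show deriv g t ⬝ᵥ (T t v₀)ᵀ 1 = 0
      rw [hdg, smul_dotProduct, hrowdot t ht 2 1]
      simp [Matrix.one_apply]
  have hfc2 : IsFramedCurve J gt w1 w2 := by
    refine ⟨hgts, hw1s, hw2s, ?_⟩
    intro t ht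
    have hdg : deriv gt t = alt t • ((T u₀ t * (T u₀ v₀)ᵀ) 2 : V3) := (hgtd t ht).deriv
    refine ⟨?_, ?_, ?_, ?_, ?_⟩
    · show (T u₀ t * (T u₀ v₀)ᵀ) 0 ⬝ᵥ (T u₀ t * (T u₀ v₀)ᵀ) 0 = 1
      rw [hrowdotW t ht 0 0, Matrix.one_apply_eq]
    · show (T u₀ t * (T u₀ v₀)ᵀ) 1 ⬝ᵥ (T u₀ t * (T u₀ v₀)ᵀ) 1 = 1
      rw [hrowdotW t ht 1 1, Matrix.one_apply_eq]
    · show (T u₀ t * (T u₀ v₀)ᵀ) 0 ⬝ᵥ (T u₀ t * (T u₀ v₀)ᵀ) 1 = 0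
      rw [hrowdotW t ht 0 1]
      simp [Matrix.one_apply]
    · show deriv gt t ⬝ᵥ (T u₀ t * (T u₀ v₀)ᵀ) 0 = 0
      rw [hdg, smul_dotProduct, hrowdotW t ht 2 0]
      simp [Matrix.one_apply]
    · show deriv gt t ⬝ᵥ (T u₀ t * (T u₀ v₀)ᵀ) 1 = 0
      rw [hdg, smul_dotProduct, hrowdotW t ht 2 1]
      simp [Matrix.one_apply]
  refine ⟨g, nu1, nu2, gt, w1, w2, hfc1, hfc2, hgderiv, hgtderiv, ?_⟩
  intro u hu v hv
  ext i j
  show (![w1 v, w2 v, mu3 w1 w2 v] i) ⬝ᵥ (![nu1 u, nu2 u, mu3 nu1 nu2 u] j) = T u v i j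
  have hWrow : ![w1 v, w2 v, mu3 w1 w2 v] i = (T u₀ v * (T u₀ v₀)ᵀ) i := by
    fin_cases i
    · rfl
    · rfl
    · exact hmuW v hv
  have hNrow : ![nu1 u, nu2 u, mu3 nu1 nu2 u] j = (T u v₀)ᵀ j := by
    fin_cases j
    · rfl
    · rfl
    · exact hmuN u hu
  rw [hWrow, hNrow, aux_row_dot, Matrix.transpose_transpose, hKey u hu v hv]

end
end

section
/- Let x(u,v) = γ(u) + γ̃(v) be the translation surface of framed curves (γ, ν₁, ν₂) and (γ̃, ν̃₁, ν̃₂) with curvatures (ℓ, m, n, α) and (ℓ̃, m̃, ñ, α̃), and frame matrix T = (t_ij). Then for all (u,v) ∈ I × J: x_u·ν₁(u) = 0, x_u·ν₂(u) = 0, x_u·μ(u) = α(u), x_v·ν₁(u) = α̃(v)t₃₁(u,v), x_v·ν₂(u) = α̃(v)t₃₂(u,v), x_v·μ(u) = α̃(v)t₃₃(u,v), and x_u(u,v) × x_v(u,v) = −α(u)α̃(v)t₃₂(u,v)·ν₁(u) + α(u)α̃(v)t₃₁(u,v)·ν₂(u); in particular (x, ν₁, ν₂) is a generalised framed surface with A(u,v)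 = −α(u)α̃(v)t₃₂(u,v) and B(u,v) = α(u)α̃(v)t₃₁(u,v). -/
open Matrix Real

noncomputable section

/-! Both partial derivatives of `x(u,v) = γ(u) + γ̃(v)` are tangent vectors of the curves,
`x_u = α(u) μ(u)` and `x_v = α̃(v) μ̃(v)`, because a vector orthogonal to the orthonormal pair
`ν₁, ν₂` is a multiple of `μ = ν₁ × ν₂`. Hence `x_u × x_v = α α̃ (μ × μ̃)`, and the vector triple
product expansion `(ν₁ × ν₂) × μ̃ = (ν₁·μ̃) ν₂ - (ν₂·μ̃) ν₁` expresses it in the frame `ν₁, ν₂`. -/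

section Smoothness

variable {𝕜 : Type*} [NontriviallyNormedField 𝕜]
  {E F G : Type*} [NormedAddCommGroup E] [NormedSpace 𝕜 E]
  [NormedAddCommGroup F] [NormedSpace 𝕜 F] [NormedAddCommGroup G] [NormedSpace 𝕜 G]
  {n : WithTop ℕ∞}

theorem ContDiffOn.comp_fst {f : E → G} {s : Set E} (hf : ContDiffOn 𝕜 n f s) (t : Set F) :
    ContDiffOn 𝕜 n (fun p : E × F => f p.1) (s ×ˢ t) :=
  hf.comp contDiff_fst.contDiffOn fun _ hp => hp.1

theorem ContDiffOn.comp_snd {f : F → G} {t : Set F} (hf : ContDiffOn 𝕜 n f t) (s : Set E) :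
    ContDiffOn 𝕜 n (fun p : E × F => f p.2) (s ×ˢ t) :=
  hf.comp contDiff_snd.contDiffOn fun _ hp => hp.2

variable [CompleteSpace 𝕜] [FiniteDimensional 𝕜 F] [FiniteDimensional 𝕜 G]
  {H : Type*} [NormedAddCommGroup H] [NormedSpace 𝕜 H] {s : Set E}

theorem ContDiffOn.linearMap_apply₂ (B : F →ₗ[𝕜] G →ₗ[𝕜] H) {f : E → F} {g : E → G}
    (hf : ContDiffOn 𝕜 n f s) (hg : ContDiffOn 𝕜 n g s) :
    ContDiffOn 𝕜 n (fun t => B (f t) (g t)) s :=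
  (B.toContinuousBilinearMap.contDiff.comp_contDiffOn hf).clm_apply hg

theorem ContDiffOn.dotProduct {ι : Type*} [Fintype ι] {f g : E → ι → 𝕜}
    (hf : ContDiffOn 𝕜 n f s) (hg : ContDiffOn 𝕜 n g s) :
    ContDiffOn 𝕜 n (fun t => f t ⬝ᵥ g t) s :=
  hf.linearMap_apply₂ (dotProductBilin 𝕜 𝕜) hg

theorem ContDiffOn.crossProduct {f g : E → Fin 3 → 𝕜}
    (hf : ContDiffOn 𝕜 n f s) (hg : ContDiffOn 𝕜 n g s) :
    ContDiffOn 𝕜 n (fun t => f t ⨯₃ g t) s :=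
  hf.linearMap_apply₂ _root_.crossProduct hg

end Smoothness

section CrossProduct

variable {R : Type*} [CommRing R]

theorem eq_dotProduct_cross_smul_cross_of_orthonormal {a b x : Fin 3 → R} (ha : a ⬝ᵥ a = 1)
    (hb : b ⬝ᵥ b = 1) (hab : a ⬝ᵥ b = 0) (hxa : x ⬝ᵥ a = 0) (hxb : x ⬝ᵥ b = 0) :
    x = (x ⬝ᵥ a ⨯₃ b) • a ⨯₃ b := by
  have hunit : a ⨯₃ b ⬝ᵥ a ⨯₃ b = 1 := by
    rw [cross_dot_cross, ha, hb, dotProduct_comm b a, hab]; ring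
  have hpar : a ⨯₃ b ⨯₃ x = 0 := by
    rw [cross_cross_eq_smul_sub_smul, dotProduct_comm a x, dotProduct_comm b x, hxa, hxb]
    simp
  have h := cross_cross_eq_smul_sub_smul' (a ⨯₃ b) (a ⨯₃ b) x
  rw [hpar, map_zero, hunit, one_smul, dotProduct_comm] at h
  exact (sub_eq_zero.mp h.symm).symm

end CrossProduct

theorem cross3_smul_smul (r s : ℝ) (a b : V3) :
    cross3 (r • a) (s • b) = (r * s) • cross3 a b := by
  rw [cross3, cross3, LinearMap.map_smul₂, map_smul, smul_smul]

theorem frameMatrix_two_zero (nu1 nu2 w1 w2 : ℝ → V3) (u v : ℝ) :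
    frameMatrix nu1 nu2 w1 w2 u v 2 0 = mu3 w1 w2 v ⬝ᵥ nu1 u := rfl

theorem frameMatrix_two_one (nu1 nu2 w1 w2 : ℝ → V3) (u v : ℝ) :
    frameMatrix nu1 nu2 w1 w2 u v 2 1 = mu3 w1 w2 v ⬝ᵥ nu2 u := rfl

theorem frameMatrix_two_two (nu1 nu2 w1 w2 : ℝ → V3) (u v : ℝ) :
    frameMatrix nu1 nu2 w1 w2 u v 2 2 = mu3 w1 w2 v ⬝ᵥ mu3 nu1 nu2 u := rfl

theorem mu3_cross3_eq (nu1 nu2 w : ℝ → V3) (u v : ℝ) :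
    cross3 (mu3 nu1 nu2 u) (w v)
      = -(w v ⬝ᵥ nu2 u) • nu1 u + (w v ⬝ᵥ nu1 u) • nu2 u := by
  rw [mu3, cross3, cross3, cross_cross_eq_smul_sub_smul, dotProduct_comm (nu1 u),
    dotProduct_comm (nu2 u), neg_smul, neg_add_eq_sub]

theorem pduV_translation (g gt : ℝ → V3) (u v : ℝ) :
    pduV (fun a b => g a + gt b) u v = deriv g u :=
  deriv_add_const (gt v)

theorem pdvV_translation (g gt : ℝ → V3) (u v : ℝ) :
    pdvV (fun a b => g a + gt b) u v = deriv gt v :=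
  deriv_const_add (g u)

namespace IsFramedCurve

variable {I : Set ℝ} {g nu1 nu2 : ℝ → V3}

theorem deriv_eq_curvA_smul_mu3 (h : IsFramedCurve I g nu1 nu2) {t : ℝ} (ht : t ∈ I) :
    deriv g t = curvA g nu1 nu2 t • mu3 nu1 nu2 t :=
  have ⟨h11, h22, h12, hg1, hg2⟩ := h.2.2.2 t ht
  eq_dotProduct_cross_smul_cross_of_orthonormal h11 h22 h12 hg1 hg2

theorem contDiffOn_mu3 (h : IsFramedCurve I g nu1 nu2) :
    ContDiffOn ℝ (⊤ : ℕ∞) (mu3 nu1 nu2) I :=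
  h.2.1.crossProduct h.2.2.1

theorem contDiffOn_curvA (h : IsFramedCurve I g nu1 nu2) (hI : IsOpen I) :
    ContDiffOn ℝ (⊤ : ℕ∞) (curvA g nu1 nu2) I :=
  (h.1.deriv_of_isOpen hI (by exact_mod_cast le_top)).dotProduct h.contDiffOn_mu3

end IsFramedCurve

theorem translationSurface_frame_relations {I J : Set ℝ} {g nu1 nu2 gt w1 w2 : ℝ → V3}
    (hg : IsFramedCurve I g nu1 nu2) (hgt : IsFramedCurve J gt w1 w2)
    {u v : ℝ} (hu : u ∈ I) (hv : v ∈ J) :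
    pduV (fun a b => g a + gt b) u v ⬝ᵥ nu1 u = 0 ∧
    pduV (fun a b => g a + gt b) u v ⬝ᵥ nu2 u = 0 ∧
    pduV (fun a b => g a + gt b) u v ⬝ᵥ mu3 nu1 nu2 u = curvA g nu1 nu2 u ∧
    pdvV (fun a b => g a + gt b) u v ⬝ᵥ nu1 u
      = curvA gt w1 w2 v * frameMatrix nu1 nu2 w1 w2 u v 2 0 ∧
    pdvV (fun a b => g a + gt b) u v ⬝ᵥ nu2 u
      = curvA gt w1 w2 v * frameMatrix nu1 nu2 w1 w2 u v 2 1 ∧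
    pdvV (fun a b => g a + gt b) u v ⬝ᵥ mu3 nu1 nu2 u
      = curvA gt w1 w2 v * frameMatrix nu1 nu2 w1 w2 u v 2 2 ∧
    cross3 (pduV (fun a b => g a + gt b) u v) (pdvV (fun a b => g a + gt b) u v)
      = (-(curvA g nu1 nu2 u * curvA gt w1 w2 v * frameMatrix nu1 nu2 w1 w2 u v 2 1)) • nu1 u
          + (curvA g nu1 nu2 u * curvA gt w1 w2 v * frameMatrix nu1 nu2 w1 w2 u v 2 0)
            • nu2 u := by
  obtain ⟨-, -, -, hg1, hg2⟩ := hg.2.2.2 u hu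
  simp only [pduV_translation, pdvV_translation, frameMatrix_two_zero, frameMatrix_two_one,
    frameMatrix_two_two, hgt.deriv_eq_curvA_smul_mu3 hv, smul_dotProduct, smul_eq_mul, true_and]
  refine ⟨hg1, hg2, rfl, ?_⟩
  rw [hg.deriv_eq_curvA_smul_mu3 hu, cross3_smul_smul, mu3_cross3_eq, smul_add, smul_smul,
    smul_smul, mul_neg]

theorem translationSurface_generalisedFramedSurface_general
    (I J : Set ℝ) (hI : IsOpen I) (hJ : IsOpen J)
    (g nu1 nu2 gt w1 w2 : ℝ → V3)
    (hg : IsFramedCurve I g nu1 nu2) (hgt : IsFramedCurve J gt w1 w2) :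
    (∀ u ∈ I, ∀ v ∈ J,
      pduV (fun a b => g a + gt b) u v ⬝ᵥ nu1 u = 0 ∧
      pduV (fun a b => g a + gt b) u v ⬝ᵥ nu2 u = 0 ∧
      pduV (fun a b => g a + gt b) u v ⬝ᵥ mu3 nu1 nu2 u = curvA g nu1 nu2 u ∧
      pdvV (fun a b => g a + gt b) u v ⬝ᵥ nu1 u
        = curvA gt w1 w2 v * frameMatrix nu1 nu2 w1 w2 u v 2 0 ∧
      pdvV (fun a b => g a + gt b) u v ⬝ᵥ nu2 u
        = curvA gt w1 w2 v * frameMatrix nu1 nu2 w1 w2 u v 2 1 ∧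
      pdvV (fun a b => g a + gt b) u v ⬝ᵥ mu3 nu1 nu2 u
        = curvA gt w1 w2 v * frameMatrix nu1 nu2 w1 w2 u v 2 2 ∧
      cross3 (pduV (fun a b => g a + gt b) u v) (pdvV (fun a b => g a + gt b) u v)
        = (-(curvA g nu1 nu2 u * curvA gt w1 w2 v * frameMatrix nu1 nu2 w1 w2 u v 2 1)) • nu1 u
            + (curvA g nu1 nu2 u * curvA gt w1 w2 v * frameMatrix nu1 nu2 w1 w2 u v 2 0) • nu2 u) ∧
    IsGeneralisedFramedSurface (I ×ˢ J) (fun p => g p.1 + gt p.2)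
      (fun p => nu1 p.1) (fun p => nu2 p.1) := by
  have relations := fun u (hu : u ∈ I) v (hv : v ∈ J) =>
    translationSurface_frame_relations hg hgt hu hv
  refine ⟨relations, (hg.1.comp_fst J).add (hgt.1.comp_snd I), hg.2.1.comp_fst J,
    hg.2.2.1.comp_fst J, fun p hp => ?_, ?_⟩
  · obtain ⟨h11, h22, h12, -, -⟩ := hg.2.2.2 p.1 hp.1
    exact ⟨h11, h22, h12⟩
  have hαα : ContDiffOn ℝ (⊤ : ℕ∞)
      (fun p : ℝ × ℝ => curvA g nu1 nu2 p.1 * curvA gt w1 w2 p.2) (I ×ˢ J) :=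
    ((hg.contDiffOn_curvA hI).comp_fst J).mul ((hgt.contDiffOn_curvA hJ).comp_snd I)
  have ht31 : ContDiffOn ℝ (⊤ : ℕ∞)
      (fun p : ℝ × ℝ => frameMatrix nu1 nu2 w1 w2 p.1 p.2 2 0) (I ×ˢ J) :=
    (hgt.contDiffOn_mu3.comp_snd I).dotProduct (hg.2.1.comp_fst J)
  have ht32 : ContDiffOn ℝ (⊤ : ℕ∞)
      (fun p : ℝ × ℝ => frameMatrix nu1 nu2 w1 w2 p.1 p.2 2 1) (I ×ˢ J) :=
    (hgt.contDiffOn_mu3.comp_snd I).dotProduct (hg.2.2.1.comp_fst J)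
  exact ⟨
    fun p => -(curvA g nu1 nu2 p.1 * curvA gt w1 w2 p.2 * frameMatrix nu1 nu2 w1 w2 p.1 p.2 2 1),
    fun p => curvA g nu1 nu2 p.1 * curvA gt w1 w2 p.2 * frameMatrix nu1 nu2 w1 w2 p.1 p.2 2 0,
    (hαα.mul ht32).neg, hαα.mul ht31, fun p hp => (relations p.1 hp.1 p.2 hp.2).2.2.2.2.2.2⟩

/-- basic invariants of the translation surface as a generalised framed surface. -/
theorem translationSurface_generalisedFramedSurface
    (I J : Set ℝ) (hI : IsOpen I) (hIc : I.OrdConnected)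
    (hJ : IsOpen J) (hJc : J.OrdConnected)
    (g nu1 nu2 gt w1 w2 : ℝ → V3)
    (hg : IsFramedCurve I g nu1 nu2) (hgt : IsFramedCurve J gt w1 w2) :
    (∀ u ∈ I, ∀ v ∈ J,
      pduV (fun a b => g a + gt b) u v ⬝ᵥ nu1 u = 0 ∧
      pduV (fun a b => g a + gt b) u v ⬝ᵥ nu2 u = 0 ∧
      pduV (fun a b => g a + gt b) u v ⬝ᵥ mu3 nu1 nu2 u = curvA g nu1 nu2 u ∧
      pdvV (fun a b => g a + gt b) u v ⬝ᵥ nu1 u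
        = curvA gt w1 w2 v * frameMatrix nu1 nu2 w1 w2 u v 2 0 ∧
      pdvV (fun a b => g a + gt b) u v ⬝ᵥ nu2 u
        = curvA gt w1 w2 v * frameMatrix nu1 nu2 w1 w2 u v 2 1 ∧
      pdvV (fun a b => g a + gt b) u v ⬝ᵥ mu3 nu1 nu2 u
        = curvA gt w1 w2 v * frameMatrix nu1 nu2 w1 w2 u v 2 2 ∧
      cross3 (pduV (fun a b => g a + gt b) u v) (pdvV (fun a b => g a + gt b) u v)
        = (-(curvA g nu1 nu2 u * curvA gt w1 w2 v * frameMatrix nu1 nu2 w1 w2 u v 2 1)) • nu1 u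
            + (curvA g nu1 nu2 u * curvA gt w1 w2 v * frameMatrix nu1 nu2 w1 w2 u v 2 0) • nu2 u) ∧
    IsGeneralisedFramedSurface (I ×ˢ J) (fun p => g p.1 + gt p.2)
      (fun p => nu1 p.1) (fun p => nu2 p.1) :=
  translationSurface_generalisedFramedSurface_general I J hI hJ g nu1 nu2 gt w1 w2 hg hgt

end
end

section
/- Let x(u,v) = γ(u) + γ̃(v) be the translation surface of framed curves (γ, ν₁, ν₂) and (γ̃, ν̃₁, ν̃₂) with curvatures (ℓ, m, n, α) and (ℓ̃, m̃, ñ, α̃), and frame matrix T = (t_ij). Then a point p = (u,v) ∈ I × J is a singular point of x (i.e. x_u(p) × x_v(p) = 0) if and only if α(u) = 0, or α̃(v) = 0, or (t₃₁(p) = 0 and t₃₂(p) = 0). Moreover, μ(u) × μ̃(v) = 0 if and only if t₃₁(p) = 0 and t₃₂(p) = 0. -/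
open Matrix Real

noncomputable section

/-! Along a framed curve `γ′ = α μ`, hence `x_u × x_v = α(u) α̃(v) (μ(u) × μ̃(v))`; and since
`μ × w = (ν₁ · w) ν₂ - (ν₂ · w) ν₁` for an orthonormal pair `ν₁, ν₂` with `μ = ν₁ × ν₂`, the cross
product `μ(u) × μ̃(v)` vanishes exactly when `μ̃(v)` is orthogonal to `ν₁(u)` and `ν₂(u)`. -/

section Orthonormal

variable {R : Type*} [CommRing R]

theorem cross_cross_eq_zero_iff_of_orthonormal {a b : Fin 3 → R} (ha : a ⬝ᵥ a = 1)
    (hb : b ⬝ᵥ b = 1) (hab : a ⬝ᵥ b = 0) (w : Fin 3 → R) :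
    a ⨯₃ b ⨯₃ w = 0 ↔ w ⬝ᵥ a = 0 ∧ w ⬝ᵥ b = 0 := by
  rw [cross_cross_eq_smul_sub_smul, dotProduct_comm w a, dotProduct_comm w b]
  refine ⟨fun h => ⟨?_, ?_⟩, fun ⟨hwa, hwb⟩ => by rw [hwa, hwb, zero_smul, zero_smul, sub_zero]⟩
  · simpa [dotProduct_comm b a, hab, hb] using congrArg (b ⬝ᵥ ·) h
  · simpa [hab, ha] using congrArg (a ⬝ᵥ ·) h

theorem cross_dot_cross_self_of_orthonormal {a b : Fin 3 → R} (ha : a ⬝ᵥ a = 1)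
    (hb : b ⬝ᵥ b = 1) (hab : a ⬝ᵥ b = 0) : a ⨯₃ b ⬝ᵥ a ⨯₃ b = 1 := by
  rw [cross_dot_cross, ha, hb, hab, dotProduct_comm b a, hab]
  ring

theorem eq_smul_cross_of_orthonormal {a b w : Fin 3 → R} (ha : a ⬝ᵥ a = 1)
    (hb : b ⬝ᵥ b = 1) (hab : a ⬝ᵥ b = 0) (hwa : w ⬝ᵥ a = 0) (hwb : w ⬝ᵥ b = 0) :
    w = (w ⬝ᵥ a ⨯₃ b) • a ⨯₃ b := by
  have hcross : a ⨯₃ b ⨯₃ w = 0 :=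
    (cross_cross_eq_zero_iff_of_orthonormal ha hb hab w).2 ⟨hwa, hwb⟩
  have h := cross_cross_eq_smul_sub_smul' (a ⨯₃ b) (a ⨯₃ b) w
  rw [hcross, map_zero, cross_dot_cross_self_of_orthonormal ha hb hab, one_smul,
    dotProduct_comm, eq_comm, sub_eq_zero] at h
  exact h.symm

theorem cross_eq_zero_iff_of_orthogonal [IsDomain R] {a b c d p q : Fin 3 → R}
    (ha : a ⬝ᵥ a = 1) (hb : b ⬝ᵥ b = 1) (hab : a ⬝ᵥ b = 0)
    (hc : c ⬝ᵥ c = 1) (hd : d ⬝ᵥ d = 1) (hcd : c ⬝ᵥ d = 0)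
    (hpa : p ⬝ᵥ a = 0) (hpb : p ⬝ᵥ b = 0) (hqc : q ⬝ᵥ c = 0) (hqd : q ⬝ᵥ d = 0) :
    p ⨯₃ q = 0 ↔
      p ⬝ᵥ a ⨯₃ b = 0 ∨ q ⬝ᵥ c ⨯₃ d = 0 ∨ (c ⨯₃ d ⬝ᵥ a = 0 ∧ c ⨯₃ d ⬝ᵥ b = 0) := by
  have hpq : p ⨯₃ q = ((p ⬝ᵥ a ⨯₃ b) * (q ⬝ᵥ c ⨯₃ d)) • (a ⨯₃ b ⨯₃ (c ⨯₃ d)) := by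
    conv_lhs =>
      rw [eq_smul_cross_of_orthonormal ha hb hab hpa hpb,
        eq_smul_cross_of_orthonormal hc hd hcd hqc hqd]
    rw [map_smul, LinearMap.map_smul₂, smul_smul, mul_comm]
  rw [hpq, smul_eq_zero, mul_eq_zero, cross_cross_eq_zero_iff_of_orthonormal ha hb hab, or_assoc]

end Orthonormal

theorem translationSurface_singular_iff_general
    (I J : Set ℝ)
    (g nu1 nu2 gt w1 w2 : ℝ → V3)
    (hg : IsFramedCurve I g nu1 nu2) (hgt : IsFramedCurve J gt w1 w2) :
    ∀ u ∈ I, ∀ v ∈ J,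
      (cross3 (pduV (fun a b => g a + gt b) u v) (pdvV (fun a b => g a + gt b) u v) = 0 ↔
        curvA g nu1 nu2 u = 0 ∨ curvA gt w1 w2 v = 0 ∨
          (frameMatrix nu1 nu2 w1 w2 u v 2 0 = 0 ∧ frameMatrix nu1 nu2 w1 w2 u v 2 1 = 0)) ∧
      (cross3 (mu3 nu1 nu2 u) (mu3 w1 w2 v) = 0 ↔
        frameMatrix nu1 nu2 w1 w2 u v 2 0 = 0 ∧ frameMatrix nu1 nu2 w1 w2 u v 2 1 = 0) := by
  intro u hu v hv
  obtain ⟨ha, hb, hab, hga, hgb⟩ := hg.2.2.2 u hu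
  obtain ⟨hc, hd, hcd, hgc, hgd⟩ := hgt.2.2.2 v hv
  rw [pduV_translation, pdvV_translation, frameMatrix_two_zero, frameMatrix_two_one]
  simp only [curvA, mu3, cross3]
  exact ⟨cross_eq_zero_iff_of_orthogonal ha hb hab hc hd hcd hga hgb hgc hgd,
    cross_cross_eq_zero_iff_of_orthonormal ha hb hab _⟩

/-- characterization of singular points of the translation surface, and of the
linearly dependent condition. -/
theorem translationSurface_singular_iff
    (I J : Set ℝ) (hI : IsOpen I) (hIc : I.OrdConnected)
    (hJ : IsOpen J) (hJc : J.OrdConnected)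
    (g nu1 nu2 gt w1 w2 : ℝ → V3)
    (hg : IsFramedCurve I g nu1 nu2) (hgt : IsFramedCurve J gt w1 w2) :
    ∀ u ∈ I, ∀ v ∈ J,
      (cross3 (pduV (fun a b => g a + gt b) u v) (pdvV (fun a b => g a + gt b) u v) = 0 ↔
        curvA g nu1 nu2 u = 0 ∨ curvA gt w1 w2 v = 0 ∨
          (frameMatrix nu1 nu2 w1 w2 u v 2 0 = 0 ∧ frameMatrix nu1 nu2 w1 w2 u v 2 1 = 0)) ∧
      (cross3 (mu3 nu1 nu2 u) (mu3 w1 w2 v) = 0 ↔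
        frameMatrix nu1 nu2 w1 w2 u v 2 0 = 0 ∧ frameMatrix nu1 nu2 w1 w2 u v 2 1 = 0) :=
  translationSurface_singular_iff_general I J g nu1 nu2 gt w1 w2 hg hgt

end
end

section
/- Let (γ, ν₁, ν₂) and (γ̃, ν̃₁, ν̃₂) be framed curves with curvatures (ℓ, m, n, α) and (ℓ̃, m̃, ñ, α̃), frame matrix T = (t_ij), translation surface x(u,v) = γ(u) + γ̃(v), and suppose θ : I × J → ℝ is smooth with t₃₂ cos θ + t₃₁ sin θ = 0 on I × J. Set n(u,v) = sin θ(u,v)·ν₁(u) + cos θ(u,v)·ν₂(u), μ(u,v) = ν₁(u) × ν₂(u), and t = n × μ. Then the basic invariants of the framed surface (x, n, μ) satisfy, for all (u,v): x_u·μ = α(u), x_u·t = 0, x_v·μ = α̃(v)t₃₃(u,v), x_v·t = α̃(v)(−t₃₂(u,v) sin θ(u,v) + t₃₁(u,v) cos θ(u,v)), n_u·μ = m(u) sin θ(u,v) + n(u) cos θ(u,v), n_u·t = θ_u(u,v) − ℓ(u), n_v·μ = 0, n_v·t = θ_v(u,v), −t_u·μ = n(u) sin θ(u,v) − m(u) cos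 θ(u,v), and −t_v·μ = 0. -/
open Matrix Real

noncomputable section

section Helpers15

lemma dot_cross_left15 (a b : V3) : a ⬝ᵥ cross3 a b = 0 := by
  simp [cross3, crossProduct, dotProduct, Fin.sum_univ_three]; ring

lemma dot_cross_right15 (a b : V3) : b ⬝ᵥ cross3 a b = 0 := by
  simp [cross3, crossProduct, dotProduct, Fin.sum_univ_three]; ring

lemma lemA15 (a b : V3) (s c : ℝ) (haa : a ⬝ᵥ a = 1) (hbb : b ⬝ᵥ b = 1) (hab : a ⬝ᵥ b = 0) :
    cross3 (s • a + c • b) (cross3 a b) = c • a + (-s) • b := by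
  simp only [dotProduct, Fin.sum_univ_three] at haa hbb hab
  funext i
  fin_cases i <;>
    simp [cross3, crossProduct, Pi.add_apply, Pi.smul_apply, smul_eq_mul,
      Matrix.vecHead, Matrix.vecTail]
  · linear_combination (s * a 0 - c * b 0) * hab - s * b 0 * haa + c * a 0 * hbb
  · linear_combination (s * a 1 - c * b 1) * hab - s * b 1 * haa + c * a 1 * hbb
  · linear_combination (s * a 2 - c * b 2) * hab - s * b 2 * haa + c * a 2 * hbb

lemma lemB15 (e f d : V3) (hee : e ⬝ᵥ e = 1) (hff : f ⬝ᵥ f = 1) (hef : e ⬝ᵥ f = 0)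
    (hde : d ⬝ᵥ e = 0) (hdf : d ⬝ᵥ f = 0) :
    d = (d ⬝ᵥ cross3 e f) • cross3 e f := by
  simp only [dotProduct, Fin.sum_univ_three] at hee hff hef hde hdf
  funext i
  fin_cases i <;>
    simp [cross3, crossProduct, Pi.smul_apply, smul_eq_mul, Matrix.vecHead, Matrix.vecTail]
  · linear_combination (-(d 0) * (f 0 * f 0 + f 1 * f 1 + f 2 * f 2)) * hee - d 0 * hff
      + d 0 * (e 0 * f 0 + e 1 * f 1 + e 2 * f 2) * hef
      + ((e 2 * f 0 - e 0 * f 2) * e 2 - (e 0 * f 1 - e 1 * f 0) * e 1) * hdf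
      - ((e 2 * f 0 - e 0 * f 2) * f 2 - (e 0 * f 1 - e 1 * f 0) * f 1) * hde
  · linear_combination (-(d 1) * (f 0 * f 0 + f 1 * f 1 + f 2 * f 2)) * hee - d 1 * hff
      + d 1 * (e 0 * f 0 + e 1 * f 1 + e 2 * f 2) * hef
      + ((e 0 * f 1 - e 1 * f 0) * e 0 - (e 1 * f 2 - e 2 * f 1) * e 2) * hdf
      - ((e 0 * f 1 - e 1 * f 0) * f 0 - (e 1 * f 2 - e 2 * f 1) * f 2) * hde
  · linear_combination (-(d 2) * (f 0 * f 0 + f 1 * f 1 + f 2 * f 2)) * hee - d 2 * hff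
      + d 2 * (e 0 * f 0 + e 1 * f 1 + e 2 * f 2) * hef
      + ((e 1 * f 2 - e 2 * f 1) * e 1 - (e 2 * f 0 - e 0 * f 2) * e 0) * hdf
      - ((e 1 * f 2 - e 2 * f 1) * f 1 - (e 2 * f 0 - e 0 * f 2) * f 0) * hde

lemma hasDerivAt_apply15 {p : ℝ → V3} {p' : V3} {x : ℝ} (h : HasDerivAt p p' x) (i : Fin 3) :
    HasDerivAt (fun t => p t i) (p' i) x := by
  have := hasFDerivAt_pi'.1 h.hasFDerivAt i
  simpa using this.hasDerivAt

lemma hasDerivAt_dot15 {p q : ℝ → V3} {p' q' : V3} {x : ℝ}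
    (hp : HasDerivAt p p' x) (hq : HasDerivAt q q' x) :
    HasDerivAt (fun t => p t ⬝ᵥ q t) (p' ⬝ᵥ q x + p x ⬝ᵥ q') x := by
  have h0 := (hasDerivAt_apply15 hp 0).mul (hasDerivAt_apply15 hq 0)
  have h1 := (hasDerivAt_apply15 hp 1).mul (hasDerivAt_apply15 hq 1)
  have h2 := (hasDerivAt_apply15 hp 2).mul (hasDerivAt_apply15 hq 2)
  have H := (h0.add h1).add h2
  simp only [dotProduct, Fin.sum_univ_three]
  refine H.congr_deriv ?_
  ring

end Helpers15

/-- basic invariants of the translation surface as a framed surface. -/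
theorem translationSurface_framedSurface_basic_invariants
    (I J : Set ℝ) (hI : IsOpen I) (hIc : I.OrdConnected)
    (hJ : IsOpen J) (hJc : J.OrdConnected)
    (g nu1 nu2 gt w1 w2 : ℝ → V3)
    (hg : IsFramedCurve I g nu1 nu2) (hgt : IsFramedCurve J gt w1 w2)
    (θ : ℝ → ℝ → ℝ)
    (hθ : ContDiffOn ℝ (⊤ : ℕ∞) (fun p : ℝ × ℝ => θ p.1 p.2) (I ×ˢ J))
    (hθeq : ∀ u ∈ I, ∀ v ∈ J,
      frameMatrix nu1 nu2 w1 w2 u v 2 1 * Real.cos (θ u v)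
        + frameMatrix nu1 nu2 w1 w2 u v 2 0 * Real.sin (θ u v) = 0) :
    ∀ u ∈ I, ∀ v ∈ J,
      pduV (fun a b => g a + gt b) u v ⬝ᵥ mu3 nu1 nu2 u = curvA g nu1 nu2 u ∧
      pduV (fun a b => g a + gt b) u v ⬝ᵥ tvecD nu1 nu2 θ u v = 0 ∧
      pdvV (fun a b => g a + gt b) u v ⬝ᵥ mu3 nu1 nu2 u
        = curvA gt w1 w2 v * frameMatrix nu1 nu2 w1 w2 u v 2 2 ∧
      pdvV (fun a b => g a + gt b) u v ⬝ᵥ tvecD nu1 nu2 θ u v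
        = curvA gt w1 w2 v * (-(frameMatrix nu1 nu2 w1 w2 u v 2 1) * Real.sin (θ u v)
            + frameMatrix nu1 nu2 w1 w2 u v 2 0 * Real.cos (θ u v)) ∧
      pduV (nvecD nu1 nu2 θ) u v ⬝ᵥ mu3 nu1 nu2 u
        = curvM nu1 nu2 u * Real.sin (θ u v) + curvN nu1 nu2 u * Real.cos (θ u v) ∧
      pduV (nvecD nu1 nu2 θ) u v ⬝ᵥ tvecD nu1 nu2 θ u v = pduS θ u v - curvL nu1 nu2 u ∧
      pdvV (nvecD nu1 nu2 θ) u v ⬝ᵥ mu3 nu1 nu2 u = 0 ∧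
      pdvV (nvecD nu1 nu2 θ) u v ⬝ᵥ tvecD nu1 nu2 θ u v = pdvS θ u v ∧
      -(pduV (tvecD nu1 nu2 θ) u v ⬝ᵥ mu3 nu1 nu2 u)
        = curvN nu1 nu2 u * Real.sin (θ u v) - curvM nu1 nu2 u * Real.cos (θ u v) ∧
      -(pdvV (tvecD nu1 nu2 θ) u v ⬝ᵥ mu3 nu1 nu2 u) = 0 := by
  intro u huI v hvJ
  obtain ⟨hgC, hn1C, hn2C, hfr⟩ := hg
  obtain ⟨hgtC, hw1C, hw2C, hfrt⟩ := hgt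
  obtain ⟨haa, hbb, hab, hga, hgb⟩ := hfr u huI
  obtain ⟨hee, hff, hef, hte, htf⟩ := hfrt v hvJ
  have hmemI : I ∈ nhds u := hI.mem_nhds huI
  have hmemJ : J ∈ nhds v := hJ.mem_nhds hvJ
  have hmemIJ : I ×ˢ J ∈ nhds (u, v) := (hI.prod hJ).mem_nhds ⟨huI, hvJ⟩
  -- differentiability of the curves
  have hdg : HasDerivAt g (deriv g u) u :=
    (((hgC.contDiffAt hmemI).differentiableAt (by norm_num))).hasDerivAt
  have hdn1 : HasDerivAt nu1 (deriv nu1 u) u :=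
    (((hn1C.contDiffAt hmemI).differentiableAt (by norm_num))).hasDerivAt
  have hdn2 : HasDerivAt nu2 (deriv nu2 u) u :=
    (((hn2C.contDiffAt hmemI).differentiableAt (by norm_num))).hasDerivAt
  have hdgt : HasDerivAt gt (deriv gt v) v :=
    (((hgtC.contDiffAt hmemJ).differentiableAt (by norm_num))).hasDerivAt
  -- partial derivatives of θ
  have hθat : DifferentiableAt ℝ (fun p : ℝ × ℝ => θ p.1 p.2) (u, v) :=
    (hθ.contDiffAt hmemIJ).differentiableAt (by norm_num)
  have hθu : HasDerivAt (fun u' => θ u' v) (pduS θ u v) u := by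
    have : DifferentiableAt ℝ (fun u' => θ u' v) u :=
      hθat.comp (f := fun u' => (u', v)) u ((differentiableAt_fun_id).prodMk (differentiableAt_const v))
    exact this.hasDerivAt
  have hθv : HasDerivAt (fun v' => θ u v') (pdvS θ u v) v := by
    have : DifferentiableAt ℝ (fun v' => θ u v') v :=
      hθat.comp v ((differentiableAt_const u).prodMk differentiableAt_id)
    exact this.hasDerivAt
  have hsinu : HasDerivAt (fun u' => Real.sin (θ u' v))
      (Real.cos (θ u v) * pduS θ u v) u := hθu.sin
  have hcosu : HasDerivAt (fun u' => Real.cos (θ u' v))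
      (-Real.sin (θ u v) * pduS θ u v) u := hθu.cos
  have hsinv : HasDerivAt (fun v' => Real.sin (θ u v'))
      (Real.cos (θ u v) * pdvS θ u v) v := (Real.hasDerivAt_sin (θ u v)).comp v hθv
  have hcosv : HasDerivAt (fun v' => Real.cos (θ u v'))
      (-Real.sin (θ u v) * pdvS θ u v) v := (Real.hasDerivAt_cos (θ u v)).comp v hθv
  -- the translation surface
  have hxu : HasDerivAt (fun u' => g u' + gt v) (deriv g u) u := hdg.add_const (gt v)
  have hxv : HasDerivAt (fun v' => g u + gt v') (deriv gt v) v := hdgt.const_add (g u)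
  -- derivatives of the constraints
  have hDaa := hasDerivAt_dot15 hdn1 hdn1
  have hDbb := hasDerivAt_dot15 hdn2 hdn2
  have hDab := hasDerivAt_dot15 hdn1 hdn2
  have hzaa : deriv (fun t => nu1 t ⬝ᵥ nu1 t) u = 0 := by
    have hev : (fun t => nu1 t ⬝ᵥ nu1 t) =ᶠ[nhds u] (fun _ => (1 : ℝ)) := by
      filter_upwards [hmemI] with t ht
      exact (hfr t ht).1
    rw [hev.deriv_eq]; simp
  have hzbb : deriv (fun t => nu2 t ⬝ᵥ nu2 t) u = 0 := by
    have hev : (fun t => nu2 t ⬝ᵥ nu2 t) =ᶠ[nhds u] (fun _ => (1 : ℝ)) := by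
      filter_upwards [hmemI] with t ht
      exact (hfr t ht).2.1
    rw [hev.deriv_eq]; simp
  have hzab : deriv (fun t => nu1 t ⬝ᵥ nu2 t) u = 0 := by
    have hev : (fun t => nu1 t ⬝ᵥ nu2 t) =ᶠ[nhds u] (fun _ => (0 : ℝ)) := by
      filter_upwards [hmemI] with t ht
      exact (hfr t ht).2.2.1
    rw [hev.deriv_eq]; simp
  have da'a : deriv nu1 u ⬝ᵥ nu1 u = 0 := by
    have h0 : deriv nu1 u ⬝ᵥ nu1 u + nu1 u ⬝ᵥ deriv nu1 u = 0 := by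
      rw [← hDaa.deriv, hzaa]
    rw [dotProduct_comm (nu1 u)] at h0; linarith
  have db'b : deriv nu2 u ⬝ᵥ nu2 u = 0 := by
    have h0 : deriv nu2 u ⬝ᵥ nu2 u + nu2 u ⬝ᵥ deriv nu2 u = 0 := by
      rw [← hDbb.deriv, hzbb]
    rw [dotProduct_comm (nu2 u)] at h0; linarith
  have hb'a : deriv nu2 u ⬝ᵥ nu1 u = -(deriv nu1 u ⬝ᵥ nu2 u) := by
    have h0 : deriv nu1 u ⬝ᵥ nu2 u + nu1 u ⬝ᵥ deriv nu2 u = 0 := by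
      rw [← hDab.deriv, hzab]
    rw [dotProduct_comm (nu1 u)] at h0; linarith
  have hba : nu2 u ⬝ᵥ nu1 u = 0 := by rw [dotProduct_comm]; exact hab
  -- the vector t
  have htv : tvecD nu1 nu2 θ u v
      = Real.cos (θ u v) • nu1 u + (-Real.sin (θ u v)) • nu2 u := by
    simp only [tvecD, nvecD, mu3]
    exact lemA15 _ _ _ _ haa hbb hab
  have htv_fun : (fun v' => tvecD nu1 nu2 θ u v')
      = fun v' => Real.cos (θ u v') • nu1 u + (-Real.sin (θ u v')) • nu2 u := by
    funext v'
    simp only [tvecD, nvecD, mu3]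
    exact lemA15 _ _ _ _ haa hbb hab
  have htveq : (fun u' => tvecD nu1 nu2 θ u' v)
      =ᶠ[nhds u] fun u' => Real.cos (θ u' v) • nu1 u' + (-Real.sin (θ u' v)) • nu2 u' := by
    filter_upwards [hmemI] with u' hu'
    obtain ⟨h1, h2, h3, _, _⟩ := hfr u' hu'
    simp only [tvecD, nvecD, mu3]
    exact lemA15 _ _ _ _ h1 h2 h3
  -- derivative computations
  have hnu : HasDerivAt (fun u' => Real.sin (θ u' v) • nu1 u' + Real.cos (θ u' v) • nu2 u')
      (Real.sin (θ u v) • deriv nu1 u + (Real.cos (θ u v) * pduS θ u v) • nu1 u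
        + (Real.cos (θ u v) • deriv nu2 u + (-Real.sin (θ u v) * pduS θ u v) • nu2 u)) u :=
    (hsinu.smul hdn1).add (hcosu.smul hdn2)
  have hnv : HasDerivAt (fun v' => Real.sin (θ u v') • nu1 u + Real.cos (θ u v') • nu2 u)
      ((Real.cos (θ u v) * pdvS θ u v) • nu1 u
        + (-Real.sin (θ u v) * pdvS θ u v) • nu2 u) v := by
    have := (hsinv.smul_const (nu1 u)).add
      (hcosv.smul_const (nu2 u))
    exact this
  have htu : HasDerivAt (fun u' => Real.cos (θ u' v) • nu1 u' + (-Real.sin (θ u' v)) • nu2 u')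
      (Real.cos (θ u v) • deriv nu1 u + (-Real.sin (θ u v) * pduS θ u v) • nu1 u
        + ((-Real.sin (θ u v)) • deriv nu2 u
            + (-(Real.cos (θ u v) * pduS θ u v)) • nu2 u)) u :=
    (hcosu.smul hdn1).add (hsinu.neg.smul hdn2)
  have htvv : HasDerivAt (fun v' => Real.cos (θ u v') • nu1 u + (-Real.sin (θ u v')) • nu2 u)
      ((-Real.sin (θ u v) * pdvS θ u v) • nu1 u
        + (-(Real.cos (θ u v) * pdvS θ u v)) • nu2 u) v := by
    have := (hcosv.smul_const (nu1 u)).add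
      (hsinv.neg.smul_const (nu2 u))
    exact this
  -- γ̃' is proportional to μ̃
  have hdd : deriv gt v = (deriv gt v ⬝ᵥ mu3 w1 w2 v) • mu3 w1 w2 v :=
    lemB15 (w1 v) (w2 v) (deriv gt v) hee hff hef hte htf
  refine ⟨?_, ?_, ?_, ?_, ?_, ?_, ?_, ?_, ?_, ?_⟩
  · -- x_u ⬝ μ = α
    simp only [pduV]
    rw [hxu.deriv]
    rfl
  · -- x_u ⬝ t = 0
    simp only [pduV]
    rw [hxu.deriv, htv]
    simp [dotProduct_add, dotProduct_smul, smul_eq_mul, hga, hgb]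
  · -- x_v ⬝ μ = α̃ t₃₃
    simp only [pdvV]
    rw [hxv.deriv, hdd]
    simp only [smul_dotProduct, smul_eq_mul, curvA, frameMatrix, Matrix.of_apply]
    simp [mu3]
  · -- x_v ⬝ t
    simp only [pdvV]
    rw [hxv.deriv, hdd, htv]
    simp only [smul_dotProduct, dotProduct_add, dotProduct_smul, smul_eq_mul, curvA,
      frameMatrix, Matrix.of_apply]
    simp [mu3]
    ring
  · -- n_u ⬝ μ
    simp only [pduV, nvecD]
    rw [hnu.deriv]
    simp only [add_dotProduct, smul_dotProduct, smul_eq_mul, curvM, curvN, mu3,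
      dot_cross_left15, dot_cross_right15, mul_zero, add_zero, zero_add]
    ring
  · -- n_u ⬝ t
    simp only [pduV, nvecD]
    rw [hnu.deriv, htv]
    simp only [add_dotProduct, smul_dotProduct, dotProduct_add, dotProduct_smul,
      smul_eq_mul, curvL]
    simp only [da'a, db'b, haa, hbb, hab, hba, hb'a]
    linear_combination (pduS θ u v - deriv nu1 u ⬝ᵥ nu2 u) * Real.sin_sq_add_cos_sq (θ u v)
  · -- n_v ⬝ μ = 0
    simp only [pdvV, nvecD]
    rw [hnv.deriv]
    simp only [add_dotProduct, smul_dotProduct, smul_eq_mul, mu3, dot_cross_left15,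
      dot_cross_right15, mul_zero, add_zero, zero_add, neg_zero]
  · -- n_v ⬝ t
    simp only [pdvV, nvecD]
    rw [hnv.deriv, htv]
    simp only [add_dotProduct, smul_dotProduct, dotProduct_add, dotProduct_smul,
      smul_eq_mul]
    simp only [haa, hbb, hab, hba]
    linear_combination (pdvS θ u v) * Real.sin_sq_add_cos_sq (θ u v)
  · -- -t_u ⬝ μ
    simp only [pduV]
    rw [htveq.deriv_eq, htu.deriv]
    simp only [add_dotProduct, smul_dotProduct, smul_eq_mul, curvM, curvN, mu3,
      dot_cross_left15, dot_cross_right15, mul_zero, add_zero, zero_add]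
    ring
  · -- -t_v ⬝ μ = 0
    simp only [pdvV]
    rw [htv_fun, htvv.deriv]
    simp only [add_dotProduct, smul_dotProduct, smul_eq_mul, mu3, dot_cross_left15,
      dot_cross_right15, mul_zero, add_zero, zero_add, neg_zero]

end
end
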